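/- Let L be a normed Riesz space, x a quasi-interior point of L, and φ a strictly positive continuous functional with φ(x) = 1. If the rank-one idempotent P = x ⊗ φ is ideal-triangularizable (i.e., there is a maximal chain of closed order ideals each invariant under P), then L is one-dimensional. -/

import Mathlib

open Filter Topology

section Defs
variable {L : Type*} [NormedAddCommGroup L] [Lattice L] [HasSolidNorm L] [IsOrderedAddMonoid L] [NormedSpace ℝ L]

def IsOrderIdeal (J : Submodule ℝ L) : Prop :=
  ∀ x y : L, |x| ≤ |y| → y ∈ J → x ∈ J

def InvariantUnder (T : L →L[ℝ] L) (J : Submodule ℝ L) : Prop :=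
  ∀ x ∈ J, T x ∈ J

def PositiveOp (T : L →L[ℝ] L) : Prop := ∀ x : L, 0 ≤ x → 0 ≤ T x

def IdealReducible (F : Set (L →L[ℝ] L)) : Prop :=
  ∃ J : Submodule ℝ L, IsOrderIdeal J ∧ IsClosed (J : Set L) ∧ J ≠ ⊥ ∧ J ≠ ⊤ ∧
    ∀ T ∈ F, InvariantUnder T J

def ClosedIdealChain (C : Set (Submodule ℝ L)) : Prop :=
  IsChain (· ≤ ·) C ∧ ∀ J ∈ C, IsOrderIdeal J ∧ IsClosed (J : Set L)

def IdealTriangularizable (F : Set (L →L[ℝ] L)) : Prop :=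
  ∃ C : Set (Submodule ℝ L), ClosedIdealChain C ∧
    (∀ C' : Set (Submodule ℝ L), ClosedIdealChain C' → C ⊆ C' → C' = C) ∧
    ∀ J ∈ C, ∀ T ∈ F, InvariantUnder T J

def QuasiInterior (x : L) : Prop :=
  0 ≤ x ∧ Dense {y : L | ∃ lam : ℝ, 0 ≤ lam ∧ |y| ≤ lam • x}

def StrictlyPosFunctional (φ : L →L[ℝ] ℝ) : Prop :=
  (∀ x : L, 0 ≤ x → 0 ≤ φ x) ∧ ∀ x : L, 0 ≤ x → x ≠ 0 → 0 < φ x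

def StrictlyPosOp (T : L →L[ℝ] L) : Prop :=
  PositiveOp T ∧ ∀ x : L, T |x| = 0 → x = 0

def AdjointStrictlyPos (T : L →L[ℝ] L) : Prop :=
  ∀ ψ : L →L[ℝ] ℝ, (∀ x : L, 0 ≤ x → 0 ≤ ψ x) → ψ.comp T = 0 → ψ = 0

def IsLatAtom (a : L) : Prop :=
  0 ≤ a ∧ a ≠ 0 ∧ ∀ x : L, 0 ≤ x → x ≤ a → ∃ lam : ℝ, 0 ≤ lam ∧ x = lam • a

def Quasinilpotent (T : L →L[ℝ] L) : Prop :=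
  Tendsto (fun n : ℕ => ‖T ^ n‖ ^ ((1:ℝ) / n)) atTop (𝓝 0)

def PowerCompact (T : L →L[ℝ] L) : Prop :=
  ∃ k : ℕ, 0 < k ∧ IsCompactOperator (T ^ k : L →L[ℝ] L)

def OpLE (S T : L →L[ℝ] L) : Prop := ∀ x : L, 0 ≤ x → S x ≤ T x

def IsBand (B : Submodule ℝ L) : Prop :=
  IsOrderIdeal B ∧ ∀ A : Set L, A.Nonempty → A ⊆ B → ∀ x : L, IsLUB A x → x ∈ B

def IsBandProjection (P : L →L[ℝ] L) (B : Submodule ℝ L) : Prop :=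
  PositiveOp P ∧ P.comp P = P ∧ (∀ x : L, P x ∈ B) ∧ (∀ x ∈ B, P x = x) ∧
    ∀ x : L, ∀ b ∈ B, |x - P x| ⊓ |b| = 0

def IsAtomicBand (B : Submodule ℝ L) : Prop :=
  IsBand B ∧ (∀ a : L, IsLatAtom a → a ∈ B) ∧
    ∀ B' : Submodule ℝ L, IsBand B' → (∀ a : L, IsLatAtom a → a ∈ B') → B ≤ B'

def DedekindComplete (L : Type*) [NormedAddCommGroup L] [Lattice L] [HasSolidNorm L] [IsOrderedAddMonoid L] : Prop :=
  ∀ A : Set L, A.Nonempty → BddAbove A → ∃ x : L, IsLUB A x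

def OrderContinuousNorm (L : Type*) [NormedAddCommGroup L] [Lattice L] [HasSolidNorm L] [IsOrderedAddMonoid L] : Prop :=
  ∀ A : Set L, A.Nonempty → DirectedOn (· ≥ ·) A → IsGLB A 0 →
    ∀ ε : ℝ, 0 < ε → ∃ a ∈ A, ‖a‖ < ε

def MaxAtomFamily (𝒜 : Set L) : Prop :=
  (∀ a ∈ 𝒜, IsLatAtom a ∧ ‖a‖ = 1) ∧
  (∀ a ∈ 𝒜, ∀ b ∈ 𝒜, a ≠ b → a ⊓ b = 0) ∧
  ∀ c : L, IsLatAtom c → ∃ a ∈ 𝒜, ¬ (c ⊓ a = 0)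

def AtomicDiagOf (𝒜 : Set L) (Pa : L → (L →L[ℝ] L)) (T D : L →L[ℝ] L) : Prop :=
  (∀ F : Finset L, ↑F ⊆ 𝒜 → OpLE (∑ a ∈ F, (Pa a).comp (T.comp (Pa a))) D) ∧
  ∀ U : L →L[ℝ] L,
    (∀ F : Finset L, ↑F ⊆ 𝒜 → OpLE (∑ a ∈ F, (Pa a).comp (T.comp (Pa a))) U) → OpLE D U

def SchepSet (T : L →L[ℝ] L) : Set (L →L[ℝ] L) :=
  {S | ∃ (m : ℕ) (P : Fin m → (L →L[ℝ] L)) (B : Fin m → Submodule ℝ L),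
    (∀ i, IsBand (B i) ∧ IsBandProjection (P i) (B i)) ∧ (∑ i, P i = 1) ∧
    S = ∑ i, (P i).comp (T.comp (P i))}

def CentralPartOf (T PT : L →L[ℝ] L) : Prop :=
  PositiveOp PT ∧ (∀ S ∈ SchepSet T, OpLE PT S) ∧
    ∀ U : L →L[ℝ] L, PositiveOp U → (∀ S ∈ SchepSet T, OpLE U S) → OpLE U PT

end Defs

/-!
If `J ≠ 0` is a closed ideal invariant under `P = x ⊗ φ` and `0 ≠ y ∈ J`, then
`P|y| = φ(|y|) x` is a nonzero multiple of `x` lying in `J`, so `J = L` because `x` is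
quasi-interior. Hence the members of a maximal chain of `P`-invariant closed ideals are `0` and
`L`, and maximality of the chain forces every closed ideal of `L` to be `0` or `L`. If some `y`
were neither positive nor negative, the disjoint complement of `y⁺` would be a closed ideal
containing `y⁻ ≠ 0` but not `y⁺ ≠ 0`. So `L` is totally ordered, the strictly positive
functional `φ` is injective, and `L = ℝ x`.
-/

section LatticeOrderedGroup

variable {G : Type*} [AddCommGroup G] [Lattice G]

lemma inf_eq_zero_of_le {a b c : G} (ha : 0 ≤ a) (hc : 0 ≤ c) (hab : a ≤ b) (h : b ⊓ c = 0) :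
    a ⊓ c = 0 :=
  le_antisymm (h ▸ inf_le_inf_right c hab) (le_inf ha hc)

variable [IsOrderedAddMonoid G]

lemma nonneg_of_two_pow_nsmul_nonneg {z : G} (k : ℕ) (h : 0 ≤ 2 ^ k • z) : 0 ≤ z := by
  induction k generalizing z with
  | zero => simpa using h
  | succ k ih => exact nsmul_two_semiclosed (ih (by rwa [← mul_nsmul', ← pow_succ]))

lemma add_inf_eq_zero {a b c : G} (ha : 0 ≤ a) (hb : 0 ≤ b) (hc : 0 ≤ c) (hac : a ⊓ c = 0)
    (hbc : b ⊓ c = 0) : (a + b) ⊓ c = 0 := by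
  have hle : (a + b) ⊓ c ≤ a :=
    calc (a + b) ⊓ c ≤ (a + b) ⊓ (a + c) := inf_le_inf_left _ (le_add_of_nonneg_left ha)
      _ = a := by rw [← add_inf, hbc, add_zero]
  exact le_antisymm (hac ▸ le_inf hle inf_le_right) (le_inf (add_nonneg ha hb) hc)

lemma nsmul_inf_eq_zero {a c : G} (ha : 0 ≤ a) (hc : 0 ≤ c) (h : a ⊓ c = 0) (n : ℕ) :
    (n • a) ⊓ c = 0 := by
  induction n with
  | zero => simpa using hc
  | succ n ih => rw [succ_nsmul]; exact add_inf_eq_zero (nsmul_nonneg ha n) ha hc ih h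

end LatticeOrderedGroup

section RealLatticeModule

variable {E : Type*} [AddCommGroup E] [Lattice E] [Module ℝ E]

lemma abs_smul_le_abs_smul_abs [PosSMulMono ℝ E] (r : ℝ) (w : E) : |r • w| ≤ |r| • |w| := by
  have hnonneg {s : ℝ} (hs : 0 ≤ s) : |s • w| ≤ s • |w| :=
    abs_le'.2 ⟨smul_le_smul_of_nonneg_left (le_abs_self w) hs,
      smul_neg s w ▸ smul_le_smul_of_nonneg_left (neg_le_abs w) hs⟩
  obtain ⟨s, hs, rfl | rfl⟩ : ∃ s : ℝ, 0 ≤ s ∧ (r = s ∨ r = -s) :=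
    ⟨|r|, abs_nonneg r, (abs_choice r).imp Eq.symm fun h => by rw [h, neg_neg]⟩
  · rw [abs_of_nonneg hs]
    exact hnonneg hs
  · rw [neg_smul, abs_neg, abs_neg, abs_of_nonneg hs]
    exact hnonneg hs

variable [IsOrderedAddMonoid E]

-- Only addition is assumed compatible with the order, so positivity of `r • w` is obtained by
-- approximating `r` by dyadic rationals and using that the positive cone is closed.
lemma real_smul_nonneg_of_closedIciTopology [TopologicalSpace E] [ContinuousSMul ℝ E]
    [ClosedIciTopology E] {r : ℝ} (hr : 0 ≤ r) {w : E} (hw : 0 ≤ w) : 0 ≤ r • w := by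
  have hdyadic (m k : ℕ) : 0 ≤ ((m : ℝ) / 2 ^ k) • w := by
    refine nonneg_of_two_pow_nsmul_nonneg k ?_
    have : 2 ^ k • (((m : ℝ) / 2 ^ k) • w) = m • w := by
      rw [← Nat.cast_smul_eq_nsmul ℝ, ← Nat.cast_smul_eq_nsmul ℝ m w, smul_smul]
      congr 1
      push_cast
      field_simp
    exact this ▸ nsmul_nonneg hw m
  have hlim : Tendsto (fun k : ℕ => ((⌊r * 2 ^ k⌋₊ : ℝ) / 2 ^ k) • w) atTop (𝓝 (r • w)) :=
    ((tendsto_nat_floor_mul_div_atTop hr).comp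
      (tendsto_pow_atTop_atTop_of_one_lt one_lt_two)).smul_const w
  exact isClosed_Ici.mem_of_tendsto hlim (Eventually.of_forall fun k => hdyadic _ k)

instance posSMulMono_real_of_closedIciTopology [TopologicalSpace E] [ContinuousSMul ℝ E]
    [ClosedIciTopology E] : PosSMulMono ℝ E :=
  .of_smul_nonneg fun _ hr _ hw => real_smul_nonneg_of_closedIciTopology hr hw

variable [PosSMulMono ℝ E]

def disjointComplement (c : E) : Submodule ℝ E where
  carrier := {w | |w| ⊓ |c| = 0}
  zero_mem' := by simp
  add_mem' {a b} ha hb :=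
    inf_eq_zero_of_le (abs_nonneg _) (abs_nonneg c) (abs_add_le a b)
      (add_inf_eq_zero (abs_nonneg a) (abs_nonneg b) (abs_nonneg c) ha hb)
  smul_mem' r w hw := by
    have hle : |r • w| ≤ ⌈|r|⌉₊ • |w| := calc
      |r • w| ≤ |r| • |w| := abs_smul_le_abs_smul_abs r w
      _ ≤ (⌈|r|⌉₊ : ℝ) • |w| := smul_le_smul_of_nonneg_right (Nat.le_ceil _) (abs_nonneg w)
      _ = ⌈|r|⌉₊ • |w| := Nat.cast_smul_eq_nsmul ℝ _ _
    exact inf_eq_zero_of_le (abs_nonneg _) (abs_nonneg c) hle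
      (nsmul_inf_eq_zero (abs_nonneg w) (abs_nonneg c) hw _)

lemma mem_disjointComplement {c w : E} : w ∈ disjointComplement c ↔ |w| ⊓ |c| = 0 := Iff.rfl

end RealLatticeModule

section NormedRieszSpace

variable {L : Type*} [NormedAddCommGroup L] [Lattice L] [NormedSpace ℝ L]

theorem IdealTriangularizable.eq_bot_or_eq_top {F : Set (L →L[ℝ] L)}
    (htri : IdealTriangularizable F) (hirr : ¬ IdealReducible F) {J : Submodule ℝ L}
    (hJ : IsOrderIdeal J) (hJc : IsClosed (J : Set L)) : J = ⊥ ∨ J = ⊤ := by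
  obtain ⟨C, ⟨hchain, hC⟩, hmax, hinv⟩ := htri
  have htriv : ∀ K ∈ C, K = ⊥ ∨ K = ⊤ := fun K hK => or_iff_not_and_not.2 fun h =>
    hirr ⟨K, (hC K hK).1, (hC K hK).2, h.1, h.2, hinv K hK⟩
  have hcomp : ∀ K ∈ C, J ≠ K → J ≤ K ∨ K ≤ J := fun K hK _ => by
    rcases htriv K hK with rfl | rfl
    exacts [Or.inr bot_le, Or.inl le_top]
  have hinsert : insert J C = C := hmax _
    ⟨hchain.insert hcomp, by rintro K (rfl | hK); exacts [⟨hJ, hJc⟩, hC K hK]⟩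
    (Set.subset_insert J C)
  exact htriv J (hinsert ▸ Set.mem_insert J C)

variable [IsOrderedAddMonoid L]

lemma StrictlyPosFunctional.injective {φ : L →L[ℝ] ℝ} (hφ : StrictlyPosFunctional φ)
    (htot : ∀ y : L, 0 ≤ y ∨ y ≤ 0) : Function.Injective φ := by
  refine (injective_iff_map_eq_zero φ).2 fun z hz => ?_
  by_contra hne
  rcases htot z with h | h
  · exact (hφ.2 z h hne).ne' hz
  · exact (hφ.2 (-z) (neg_nonneg.2 h) (neg_ne_zero.2 hne)).ne' (by rw [map_neg, hz, neg_zero])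

variable [HasSolidNorm L]

lemma isOrderIdeal_disjointComplement (c : L) : IsOrderIdeal (disjointComplement c) :=
  fun _ _ hxy hy => inf_eq_zero_of_le (abs_nonneg _) (abs_nonneg c) hxy hy

lemma isClosed_disjointComplement (c : L) : IsClosed (disjointComplement c : Set L) :=
  isClosed_singleton.preimage
    ((continuous_id.sup continuous_neg).inf continuous_const : Continuous fun w : L => |w| ⊓ |c|)

lemma nonneg_or_nonpos_of_closed_ideals_trivial
    (h : ∀ J : Submodule ℝ L, IsOrderIdeal J → IsClosed (J : Set L) → J = ⊥ ∨ J = ⊤) (y : L) :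
    0 ≤ y ∨ y ≤ 0 := by
  rcases h _ (isOrderIdeal_disjointComplement y⁺) (isClosed_disjointComplement y⁺) with hJ | hJ
  · have hneg : y⁻ ∈ disjointComplement y⁺ := by
      rw [mem_disjointComplement, abs_of_nonneg (negPart_nonneg y),
        abs_of_nonneg (posPart_nonneg y), inf_comm, posPart_inf_negPart_eq_zero]
    rw [hJ, Submodule.mem_bot, negPart_eq_zero] at hneg
    exact Or.inl hneg
  · have hpos : y⁺ ∈ disjointComplement y⁺ := hJ ▸ Submodule.mem_top
    rw [mem_disjointComplement, inf_idem, abs_of_nonneg (posPart_nonneg y), posPart_eq_zero] at hpos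
    exact Or.inr hpos

lemma QuasiInterior.eq_top_of_mem {x : L} (hx : QuasiInterior x) {J : Submodule ℝ L}
    (hJ : IsOrderIdeal J) (hJc : IsClosed (J : Set L)) (hxJ : x ∈ J) : J = ⊤ := by
  have hsub : {y : L | ∃ lam : ℝ, 0 ≤ lam ∧ |y| ≤ lam • x} ⊆ J := by
    rintro w ⟨lam, hlam, hw⟩
    refine hJ w (lam • x) ?_ (J.smul_mem lam hxJ)
    rwa [abs_of_nonneg (smul_nonneg hlam hx.1)]
  exact Submodule.eq_top_iff'.2 fun z => hJc.closure_subset_iff.2 hsub (hx.2 z)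

theorem not_idealReducible_smulRight {x : L} {φ : L →L[ℝ] ℝ} (hx : QuasiInterior x)
    (hφ : StrictlyPosFunctional φ) : ¬ IdealReducible ({φ.smulRight x} : Set (L →L[ℝ] L)) := by
  rintro ⟨J, hJ, hJc, hbot, htop, hinv⟩
  obtain ⟨y, hyJ, hy⟩ := Submodule.exists_mem_ne_zero_of_ne_bot hbot
  have habs : |y| ∈ J := hJ |y| y (abs_abs y).le hyJ
  have habs_ne : |y| ≠ 0 := by rwa [← norm_ne_zero_iff, norm_abs_eq_norm, norm_ne_zero_iff]
  have hφy : 0 < φ |y| := hφ.2 |y| (abs_nonneg y) habs_ne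
  have hPy : φ |y| • x ∈ J := hinv _ rfl _ habs
  exact htop (hx.eq_top_of_mem hJ hJc ((J.smul_mem_iff hφy.ne').1 hPy))

end NormedRieszSpace

theorem stmt4 {L : Type*} [NormedAddCommGroup L] [Lattice L] [HasSolidNorm L] [IsOrderedAddMonoid L] [NormedSpace ℝ L]
    (x : L) (φ : L →L[ℝ] ℝ) (hx : QuasiInterior x) (hφ : StrictlyPosFunctional φ)
    (hφx : φ x = 1)
    (htri : IdealTriangularizable ({φ.smulRight x} : Set (L →L[ℝ] L))) :
    Module.finrank ℝ L = 1 := by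
  have hx0 : x ≠ 0 := by
    rintro rfl
    simp at hφx
  have htot : ∀ y : L, 0 ≤ y ∨ y ≤ 0 := nonneg_or_nonpos_of_closed_ideals_trivial fun _ hJ hJc =>
    htri.eq_bot_or_eq_top (not_idealReducible_smulRight hx hφ) hJ hJc
  refine finrank_eq_one x hx0 fun y => ⟨φ y, hφ.injective htot ?_⟩
  simp [hφx]
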